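/- arXiv:2508.17430 — 5 statements merged into one kernel-verified Lean document; each statement's English description precedes it below -/
import Mathlib

section
/- (Data-driven temporal difference equation, Lemma 3.) Consider a trajectory x(t+1) = A x(t) + B u(t) with outputs ỹ(t) = C̃ x(t), where A ∈ ℝ^{n×n}, B ∈ ℝ^{n×m}, C̃ ∈ ℝ^{p'×n}. Let a ∈ ℝ and let W ∈ ℝ^{n×n} satisfy a² Aᵀ W A − W + C̃ᵀ C̃ = 0. Suppose M ∈ ℝ^{n×q}, E₁ ∈ ℝ^{q×m}, and z : ℕ → ℝ^q are such that B = M E₁ and x(t) = M z(t) for all t ≥ N. Define W̄ = Mᵀ W M. Then: (i) for all t ≥ N, a² (z(t+1) − E₁ u(t))ᵀ W̄ (z(t+1) − E₁ u(t)) − z(t)ᵀ W̄ z(t) + ‖ỹ(t)‖² = 0; and (ii) tr(E₁ᵀ W̄ E₁) = tr(Bᵀ W B). -/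
open Matrix

/-- Lemma 3: data-driven temporal difference equation.
For a trajectory x(t+1) = A x(t) + B u(t), ỹ(t) = C̃ x(t), with W solving
a² Aᵀ W A − W + C̃ᵀ C̃ = 0, B = M E₁ and x(t) = M z(t) for t ≥ N, and
W̄ = Mᵀ W M, we have for all t ≥ N:
a² (z(t+1) − E₁ u(t))ᵀ W̄ (z(t+1) − E₁ u(t)) − z(t)ᵀ W̄ z(t) + ‖ỹ(t)‖² = 0,
and tr(E₁ᵀ W̄ E₁) = tr(Bᵀ W B). -/
theorem stmt_6 {n m p' q : ℕ}
    (A : Matrix (Fin n) (Fin n) ℝ) (B : Matrix (Fin n) (Fin m) ℝ)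
    (Ct : Matrix (Fin p') (Fin n) ℝ) (a : ℝ)
    (x : ℕ → Fin n → ℝ) (u : ℕ → Fin m → ℝ)
    (hsys : ∀ t : ℕ, x (t + 1) = A *ᵥ x t + B *ᵥ u t)
    (W : Matrix (Fin n) (Fin n) ℝ)
    (hW : a ^ 2 • (Aᵀ * W * A) - W + Ctᵀ * Ct = 0)
    (M : Matrix (Fin n) (Fin q) ℝ) (E1 : Matrix (Fin q) (Fin m) ℝ)
    (z : ℕ → Fin q → ℝ) (N : ℕ)
    (hB : B = M * E1) (hxz : ∀ t : ℕ, N ≤ t → x t = M *ᵥ z t)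
    (Wbar : Matrix (Fin q) (Fin q) ℝ) (hWbar : Wbar = Mᵀ * W * M) :
    (∀ t : ℕ, N ≤ t →
      a ^ 2 * ((z (t + 1) - E1 *ᵥ u t) ⬝ᵥ (Wbar *ᵥ (z (t + 1) - E1 *ᵥ u t)))
        - z t ⬝ᵥ (Wbar *ᵥ z t)
        + (Ct *ᵥ x t) ⬝ᵥ (Ct *ᵥ x t) = 0)
    ∧ Matrix.trace (E1ᵀ * Wbar * E1) = Matrix.trace (Bᵀ * W * B) := by
  have key : ∀ v : Fin q → ℝ, v ⬝ᵥ (Wbar *ᵥ v) = (M *ᵥ v) ⬝ᵥ (W *ᵥ (M *ᵥ v)) := by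
    intro v
    rw [hWbar, Matrix.mul_assoc, ← Matrix.mulVec_mulVec, ← Matrix.mulVec_mulVec,
      Matrix.dotProduct_mulVec, Matrix.vecMul_transpose]
  constructor
  · intro t ht
    have hMz : M *ᵥ (z (t + 1) - E1 *ᵥ u t) = A *ᵥ x t := by
      rw [Matrix.mulVec_sub, ← hxz (t + 1) (le_trans ht (Nat.le_succ t)),
        Matrix.mulVec_mulVec, ← hB, hsys t]
      abel
    have hWx : W = a ^ 2 • (Aᵀ * W * A) + Ctᵀ * Ct := by
      have h := hW
      rw [sub_add_eq_add_sub, sub_eq_zero] at h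
      exact h.symm
    rw [key, key, hMz, ← hxz t ht]
    have expand : x t ⬝ᵥ (W *ᵥ x t)
        = a ^ 2 * ((A *ᵥ x t) ⬝ᵥ (W *ᵥ (A *ᵥ x t))) + (Ct *ᵥ x t) ⬝ᵥ (Ct *ᵥ x t) := by
      conv_lhs => rw [hWx]
      rw [Matrix.add_mulVec, dotProduct_add, Matrix.smul_mulVec,
        dotProduct_smul]
      congr 1
      · rw [Matrix.mul_assoc, ← Matrix.mulVec_mulVec, ← Matrix.mulVec_mulVec,
          Matrix.dotProduct_mulVec, Matrix.vecMul_transpose]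
        rfl
      · rw [← Matrix.mulVec_mulVec, Matrix.dotProduct_mulVec, Matrix.vecMul_transpose]
    rw [expand]
    ring
  · rw [hWbar, hB]
    simp [Matrix.transpose_mul, Matrix.mul_assoc]
end

section
/- (Theorem 1: correct cost recovery under a relaxed rank condition.) Let a ∈ ℝ, Λ ∈ ℝ^{q×q̄}, Ē₁ ∈ ℝ^{q̄×m}, E₁ = Λ Ē₁ ∈ ℝ^{q×m}, and let z̄ : ℕ → ℝ^{q̄}, u : ℕ → ℝᵐ, ỹ : ℕ → ℝ^{p'} be given, with z(t) := Λ z̄(t). Let t₀,…,t_k be time instants and suppose the reduced data is fully exciting: the only symmetric S ∈ ℝ^{q̄×q̄} satisfying a² (z̄(tᵢ+1) − Ē₁ u(tᵢ))ᵀ S (z̄(tᵢ+1) − Ē₁ u(tᵢ)) − z̄(tᵢ)ᵀ S z̄(tᵢ) = 0 for all i = 0,…,k is S = 0 (in the paper this is the rank condition rank(Ψ) = (Nm+n)(Nm+n+1)/2). If two symmetric matrices W̄, Ŵ ∈ ℝ^{q×q} both satisfy a² (z(tᵢ+1) − E₁ u(tᵢ))ᵀ W (z(tᵢ+1) − E₁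 u(tᵢ)) − z(tᵢ)ᵀ W z(tᵢ) + ‖ỹ(tᵢ)‖² = 0 for all i = 0,…,k, then Λᵀ W̄ Λ = Λᵀ Ŵ Λ; in particular E₁ᵀ W̄ E₁ = E₁ᵀ Ŵ E₁ and tr(E₁ᵀ W̄ E₁) = tr(E₁ᵀ Ŵ E₁). -/
open Matrix

lemma aux_quad {q qbar : ℕ} (Λ : Matrix (Fin q) (Fin qbar) ℝ)
    (W : Matrix (Fin q) (Fin q) ℝ) (v w : Fin qbar → ℝ) :
    (Λ *ᵥ v) ⬝ᵥ (W *ᵥ (Λ *ᵥ w)) = v ⬝ᵥ ((Λᵀ * W * Λ) *ᵥ w) := by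
  rw [mulVec_mulVec, dotProduct_mulVec, dotProduct_mulVec, ← vecMul_transpose,
    vecMul_vecMul, Matrix.mul_assoc]

/-- Theorem 1: correct cost recovery under a relaxed rank condition.
With E₁ = Λ Ē₁ and z(t) = Λ z̄(t), if the reduced data is fully exciting
(the only symmetric S ∈ ℝ^{q̄×q̄} annihilating all reduced quadratic regressors is 0),
then any two symmetric solutions W̄, Ŵ of the stacked data equations satisfy
Λᵀ W̄ Λ = Λᵀ Ŵ Λ, E₁ᵀ W̄ E₁ = E₁ᵀ Ŵ E₁, and tr(E₁ᵀ W̄ E₁) = tr(E₁ᵀ Ŵ E₁). -/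
theorem stmt_8 {q qbar m p' : ℕ} (a : ℝ)
    (Λ : Matrix (Fin q) (Fin qbar) ℝ) (Ebar1 : Matrix (Fin qbar) (Fin m) ℝ)
    (E1 : Matrix (Fin q) (Fin m) ℝ) (hE1 : E1 = Λ * Ebar1)
    (zbar : ℕ → Fin qbar → ℝ) (u : ℕ → Fin m → ℝ) (yt : ℕ → Fin p' → ℝ)
    (z : ℕ → Fin q → ℝ) (hz : ∀ t : ℕ, z t = Λ *ᵥ zbar t)
    (k : ℕ) (ts : Fin (k + 1) → ℕ)
    (hexc : ∀ S : Matrix (Fin qbar) (Fin qbar) ℝ, S.IsSymm →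
      (∀ i : Fin (k + 1),
        a ^ 2 * ((zbar (ts i + 1) - Ebar1 *ᵥ u (ts i)) ⬝ᵥ
            (S *ᵥ (zbar (ts i + 1) - Ebar1 *ᵥ u (ts i))))
          - zbar (ts i) ⬝ᵥ (S *ᵥ zbar (ts i)) = 0) → S = 0)
    (Wbar What : Matrix (Fin q) (Fin q) ℝ)
    (hWbarSymm : Wbar.IsSymm) (hWhatSymm : What.IsSymm)
    (hWbar : ∀ i : Fin (k + 1),
      a ^ 2 * ((z (ts i + 1) - E1 *ᵥ u (ts i)) ⬝ᵥ
          (Wbar *ᵥ (z (ts i + 1) - E1 *ᵥ u (ts i))))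
        - z (ts i) ⬝ᵥ (Wbar *ᵥ z (ts i)) + yt (ts i) ⬝ᵥ yt (ts i) = 0)
    (hWhat : ∀ i : Fin (k + 1),
      a ^ 2 * ((z (ts i + 1) - E1 *ᵥ u (ts i)) ⬝ᵥ
          (What *ᵥ (z (ts i + 1) - E1 *ᵥ u (ts i))))
        - z (ts i) ⬝ᵥ (What *ᵥ z (ts i)) + yt (ts i) ⬝ᵥ yt (ts i) = 0) :
    Λᵀ * Wbar * Λ = Λᵀ * What * Λ ∧
    E1ᵀ * Wbar * E1 = E1ᵀ * What * E1 ∧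
    Matrix.trace (E1ᵀ * Wbar * E1) = Matrix.trace (E1ᵀ * What * E1) := by
  set S : Matrix (Fin qbar) (Fin qbar) ℝ := Λᵀ * Wbar * Λ - Λᵀ * What * Λ with hS
  have hfac : ∀ t : ℕ, z (t + 1) - E1 *ᵥ u t = Λ *ᵥ (zbar (t + 1) - Ebar1 *ᵥ u t) := by
    intro t
    rw [hz, hE1, mulVec_sub, ← mulVec_mulVec]
  have hSsymm : S.IsSymm := by
    unfold Matrix.IsSymm
    rw [hS, transpose_sub, transpose_mul, transpose_mul, transpose_transpose,
      transpose_mul, transpose_mul, transpose_transpose, hWbarSymm.eq, hWhatSymm.eq,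
      Matrix.mul_assoc, Matrix.mul_assoc]
  have hS0 : S = 0 := by
    apply hexc S hSsymm
    intro i
    have h1 := hWbar i
    have h2 := hWhat i
    rw [hfac, hz, aux_quad, aux_quad] at h1 h2
    have := sub_eq_zero_of_eq (h1.trans h2.symm)
    rw [hS, sub_mulVec, sub_mulVec, dotProduct_sub, dotProduct_sub]
    ring_nf
    ring_nf at this
    linarith
  have hΛ : Λᵀ * Wbar * Λ = Λᵀ * What * Λ := by
    have := sub_eq_zero.mp hS0
    exact this
  refine ⟨hΛ, ?_, ?_⟩
  · have hE : E1ᵀ * Wbar * E1 = Ebar1ᵀ * (Λᵀ * Wbar * Λ) * Ebar1 := by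
      rw [hE1, transpose_mul]; simp only [Matrix.mul_assoc]
    have hE' : E1ᵀ * What * E1 = Ebar1ᵀ * (Λᵀ * What * Λ) * Ebar1 := by
      rw [hE1, transpose_mul]; simp only [Matrix.mul_assoc]
    rw [hE, hE', hΛ]
  · have hE : E1ᵀ * Wbar * E1 = Ebar1ᵀ * (Λᵀ * Wbar * Λ) * Ebar1 := by
      rw [hE1, transpose_mul]; simp only [Matrix.mul_assoc]
    have hE' : E1ᵀ * What * E1 = Ebar1ᵀ * (Λᵀ * What * Λ) * Ebar1 := by
      rw [hE1, transpose_mul]; simp only [Matrix.mul_assoc]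
    rw [hE, hE', hΛ]
end

section
/- (Data-driven finite-horizon Lyapunov recursion, Lemma 5.) Consider a trajectory x(τ+1) = A x(τ) + B u(τ) with outputs ỹ(τ) = C̃ x(τ), where A ∈ ℝ^{n×n}, B ∈ ℝ^{n×m}, C̃ ∈ ℝ^{p'×n}. Define W_o(0) = 0 and W_o(t+1) = Aᵀ W_o(t) A + C̃ᵀ C̃ for t ∈ ℕ. Suppose M ∈ ℝ^{n×q}, E₁ ∈ ℝ^{q×m}, and z : ℕ → ℝ^q are such that B = M E₁ and x(τ) = M z(τ) for all τ ≥ N. Define W̄(t) = Mᵀ W_o(t) M. Then W̄(0) = 0 and for all τ ≥ N and all t ∈ ℕ: z(τ)ᵀ W̄(t+1) z(τ) = (z(τ+1) − E₁ u(τ))ᵀ W̄(t) (z(τ+1) − E₁ u(τ)) + ‖ỹ(τ)‖². Moreover, for every T ∈ ℕ, tr(E₁ᵀ W̄(T) E₁) = tr(Bᵀ W_o(T) B). -/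
open Matrix

lemma key_aux {n q : ℕ} (M : Matrix (Fin n) (Fin q) ℝ) (a : Fin q → ℝ)
    (w : Fin n → ℝ) : a ⬝ᵥ (Mᵀ *ᵥ w) = (M *ᵥ a) ⬝ᵥ w := by
  rw [Matrix.mulVec_transpose, dotProduct_comm (M *ᵥ a) w,
    Matrix.dotProduct_mulVec, dotProduct_comm]

lemma quadform_aux {n q : ℕ} (W : Matrix (Fin n) (Fin n) ℝ)
    (M : Matrix (Fin n) (Fin q) ℝ) (a : Fin q → ℝ) :
    a ⬝ᵥ ((Mᵀ * W * M) *ᵥ a) = (M *ᵥ a) ⬝ᵥ (W *ᵥ (M *ᵥ a)) := by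
  rw [← Matrix.mulVec_mulVec, ← Matrix.mulVec_mulVec, key_aux]

lemma quadform_aux2 {p q : ℕ} (C : Matrix (Fin p) (Fin q) ℝ) (a : Fin q → ℝ) :
    a ⬝ᵥ ((Cᵀ * C) *ᵥ a) = (C *ᵥ a) ⬝ᵥ (C *ᵥ a) := by
  rw [← Matrix.mulVec_mulVec, key_aux]
/-- Lemma 5: data-driven finite-horizon Lyapunov recursion.
For a trajectory x(τ+1) = A x(τ) + B u(τ), ỹ(τ) = C̃ x(τ), with
W_o(0) = 0, W_o(t+1) = Aᵀ W_o(t) A + C̃ᵀ C̃, B = M E₁, x(τ) = M z(τ) for τ ≥ N,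
and W̄(t) = Mᵀ W_o(t) M: W̄(0) = 0, and for all τ ≥ N and t ∈ ℕ,
z(τ)ᵀ W̄(t+1) z(τ) = (z(τ+1) − E₁ u(τ))ᵀ W̄(t) (z(τ+1) − E₁ u(τ)) + ‖ỹ(τ)‖²,
and for every T, tr(E₁ᵀ W̄(T) E₁) = tr(Bᵀ W_o(T) B). -/
theorem stmt_10 {n m p' q : ℕ}
    (A : Matrix (Fin n) (Fin n) ℝ) (B : Matrix (Fin n) (Fin m) ℝ)
    (Ct : Matrix (Fin p') (Fin n) ℝ)
    (x : ℕ → Fin n → ℝ) (u : ℕ → Fin m → ℝ)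
    (hsys : ∀ τ : ℕ, x (τ + 1) = A *ᵥ x τ + B *ᵥ u τ)
    (Wo : ℕ → Matrix (Fin n) (Fin n) ℝ)
    (hWo0 : Wo 0 = 0)
    (hWo : ∀ t : ℕ, Wo (t + 1) = Aᵀ * Wo t * A + Ctᵀ * Ct)
    (M : Matrix (Fin n) (Fin q) ℝ) (E1 : Matrix (Fin q) (Fin m) ℝ)
    (z : ℕ → Fin q → ℝ) (N : ℕ)
    (hB : B = M * E1) (hxz : ∀ τ : ℕ, N ≤ τ → x τ = M *ᵥ z τ)
    (Wbar : ℕ → Matrix (Fin q) (Fin q) ℝ)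
    (hWbar : ∀ t : ℕ, Wbar t = Mᵀ * Wo t * M) :
    Wbar 0 = 0 ∧
    (∀ τ : ℕ, N ≤ τ → ∀ t : ℕ,
      z τ ⬝ᵥ (Wbar (t + 1) *ᵥ z τ) =
        (z (τ + 1) - E1 *ᵥ u τ) ⬝ᵥ (Wbar t *ᵥ (z (τ + 1) - E1 *ᵥ u τ))
          + (Ct *ᵥ x τ) ⬝ᵥ (Ct *ᵥ x τ)) ∧
    (∀ T : ℕ, Matrix.trace (E1ᵀ * Wbar T * E1) = Matrix.trace (Bᵀ * Wo T * B)) := by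
  refine ⟨by simp [hWbar, hWo0], ?_, ?_⟩
  · intro τ hτ t
    have hMv : M *ᵥ (z (τ + 1) - E1 *ᵥ u τ) = A *ᵥ x τ := by
      rw [Matrix.mulVec_sub, ← hxz (τ+1) (le_trans hτ (Nat.le_succ τ)),
        Matrix.mulVec_mulVec, ← hB, hsys τ]
      ring
    rw [hWbar, hWbar, hWo, quadform_aux, quadform_aux, hMv,
      Matrix.add_mulVec, dotProduct_add,
      quadform_aux, quadform_aux2, ← hxz τ hτ]
  · intro T
    rw [hWbar, hB, Matrix.transpose_mul]
    simp [Matrix.mul_assoc]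
end

section
/- (Theorem 2: correct finite-horizon cost recovery under a relaxed rank condition.) Let Λ ∈ ℝ^{q×q̄}, Ē₁ ∈ ℝ^{q̄×m}, E₁ = Λ Ē₁, and let z̄ : ℕ → ℝ^{q̄}, u : ℕ → ℝᵐ, ỹ : ℕ → ℝ^{p'} be given, with z(τ) := Λ z̄(τ). Let t₀,…,t_k be time instants and suppose the state-level data is fully exciting: the only symmetric S ∈ ℝ^{q̄×q̄} with z̄(tᵢ)ᵀ S z̄(tᵢ) = 0 for all i = 0,…,k is S = 0 (in the paper this is the rank condition rank(Ψ₁) = (Nm+n)(Nm+n+1)/2). Let W̄ : ℕ → ℝ^{q×q} and Ŵ : ℕ → ℝ^{q×q} be two sequences of symmetric matrices with W̄(0) = Ŵ(0) = 0, both satisfying for every t ∈ ℕ and every i = 0,…,k: z(tᵢ)ᵀ W(t+1) z(tᵢ) = (z(tᵢ+1) − E₁ u(tᵢ))ᵀ W(t) (z(tᵢ+1) − E₁ u(tᵢ)) + ‖ỹ(tᵢ)‖². Then Λᵀ W̄(t) Λ = Λᵀ Ŵ(t) Λ for every t ∈ ℕ; in particular, for every T, E₁ᵀ W̄(T) E₁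 = E₁ᵀ Ŵ(T) E₁ and tr(E₁ᵀ Ŵ(T) E₁) = tr(E₁ᵀ W̄(T) E₁). -/
open Matrix

lemma conj_dot {q qbar : ℕ} (Λ : Matrix (Fin q) (Fin qbar) ℝ)
    (M : Matrix (Fin q) (Fin q) ℝ) (v w : Fin qbar → ℝ) :
    (Λ *ᵥ v) ⬝ᵥ (M *ᵥ (Λ *ᵥ w)) = v ⬝ᵥ ((Λᵀ * M * Λ) *ᵥ w) := by
  rw [Matrix.dotProduct_mulVec, Matrix.dotProduct_mulVec, Matrix.vecMul_vecMul,
    ← Matrix.vecMul_transpose, Matrix.vecMul_vecMul, Matrix.mul_assoc, Matrix.dotProduct_mulVec]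

/-- Theorem 2: correct finite-horizon cost recovery under a relaxed
rank condition. With E₁ = Λ Ē₁ and z(τ) = Λ z̄(τ), if the state-level data is fully
exciting (the only symmetric S with z̄(tᵢ)ᵀ S z̄(tᵢ) = 0 for all i is 0), then any
two sequences W̄, Ŵ of symmetric matrices with W̄(0) = Ŵ(0) = 0 satisfying the
stacked data recursion coincide after conjugation by Λ:
Λᵀ W̄(t) Λ = Λᵀ Ŵ(t) Λ for all t; in particular E₁ᵀ W̄(T) E₁ = E₁ᵀ Ŵ(T) E₁ and
tr(E₁ᵀ Ŵ(T) E₁) = tr(E₁ᵀ W̄(T) E₁). -/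
theorem stmt_11 {q qbar m p' : ℕ}
    (Λ : Matrix (Fin q) (Fin qbar) ℝ) (Ebar1 : Matrix (Fin qbar) (Fin m) ℝ)
    (E1 : Matrix (Fin q) (Fin m) ℝ) (hE1 : E1 = Λ * Ebar1)
    (zbar : ℕ → Fin qbar → ℝ) (u : ℕ → Fin m → ℝ) (yt : ℕ → Fin p' → ℝ)
    (z : ℕ → Fin q → ℝ) (hz : ∀ τ : ℕ, z τ = Λ *ᵥ zbar τ)
    (k : ℕ) (ts : Fin (k + 1) → ℕ)
    (hexc : ∀ S : Matrix (Fin qbar) (Fin qbar) ℝ, S.IsSymm →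
      (∀ i : Fin (k + 1), zbar (ts i) ⬝ᵥ (S *ᵥ zbar (ts i)) = 0) → S = 0)
    (Wbar What : ℕ → Matrix (Fin q) (Fin q) ℝ)
    (hWbarSymm : ∀ t : ℕ, (Wbar t).IsSymm) (hWhatSymm : ∀ t : ℕ, (What t).IsSymm)
    (hWbar0 : Wbar 0 = 0) (hWhat0 : What 0 = 0)
    (hWbar : ∀ t : ℕ, ∀ i : Fin (k + 1),
      z (ts i) ⬝ᵥ (Wbar (t + 1) *ᵥ z (ts i)) =
        (z (ts i + 1) - E1 *ᵥ u (ts i)) ⬝ᵥ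
            (Wbar t *ᵥ (z (ts i + 1) - E1 *ᵥ u (ts i)))
          + yt (ts i) ⬝ᵥ yt (ts i))
    (hWhat : ∀ t : ℕ, ∀ i : Fin (k + 1),
      z (ts i) ⬝ᵥ (What (t + 1) *ᵥ z (ts i)) =
        (z (ts i + 1) - E1 *ᵥ u (ts i)) ⬝ᵥ
            (What t *ᵥ (z (ts i + 1) - E1 *ᵥ u (ts i)))
          + yt (ts i) ⬝ᵥ yt (ts i)) :
    (∀ t : ℕ, Λᵀ * Wbar t * Λ = Λᵀ * What t * Λ) ∧
    (∀ T : ℕ, E1ᵀ * Wbar T * E1 = E1ᵀ * What T * E1) ∧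
    (∀ T : ℕ, Matrix.trace (E1ᵀ * What T * E1) = Matrix.trace (E1ᵀ * Wbar T * E1)) := by
  have key : ∀ t : ℕ, Λᵀ * Wbar t * Λ = Λᵀ * What t * Λ := by
    intro t
    induction t with
    | zero => simp [hWbar0, hWhat0]
    | succ t ih =>
      have hD : Λᵀ * Wbar (t + 1) * Λ - Λᵀ * What (t + 1) * Λ = 0 := by
        apply hexc
        · show (Λᵀ * Wbar (t + 1) * Λ - Λᵀ * What (t + 1) * Λ)ᵀ = _
          simp only [Matrix.transpose_sub, Matrix.transpose_mul, Matrix.transpose_transpose,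
            (hWbarSymm (t + 1)).eq, (hWhatSymm (t + 1)).eq, Matrix.mul_assoc]
        · intro i
          have h1 := hWbar t i
          have h2 := hWhat t i
          have hzw : z (ts i + 1) - E1 *ᵥ u (ts i) =
              Λ *ᵥ (zbar (ts i + 1) - Ebar1 *ᵥ u (ts i)) := by
            rw [hz, hE1, Matrix.mulVec_sub, ← Matrix.mulVec_mulVec]
          rw [hzw, hz] at h1 h2
          rw [conj_dot, conj_dot] at h1 h2
          simp [Matrix.sub_mulVec, dotProduct_sub, h1, h2, ih]
      exact sub_eq_zero.mp hD
  have key2 : ∀ T : ℕ, E1ᵀ * Wbar T * E1 = E1ᵀ * What T * E1 := by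
    intro T
    have h : ∀ W : Matrix (Fin q) (Fin q) ℝ,
        E1ᵀ * W * E1 = Ebar1ᵀ * (Λᵀ * W * Λ) * Ebar1 := by
      intro W
      rw [hE1, Matrix.transpose_mul]
      simp [Matrix.mul_assoc]
    rw [h, h, key T]
  exact ⟨key, key2, fun T => by rw [key2 T]⟩
end

section
/- (Theorem 5, item 2: data-driven necessary and sufficient condition for observability.) Let T ∈ ℝ^{q×m₁}, V ∈ ℝ^{q×n}, and form Λ̃ = [[I_{m₁}, 0], [T, V]] ∈ ℝ^{(m₁+q)×(m₁+n)}. Let Z̄ ∈ ℝ^{(m₁+n)×k} satisfy rank(Z̄) = m₁ + n (full row rank of the underlying input-state data). Then rank(Λ̃ Z̄) = m₁ + n if and only if rank(V) = n. -/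
open Matrix

lemma rank_eq_iff_injective' {m n : ℕ} (A : Matrix (Fin m) (Fin n) ℝ) :
    A.rank = n ↔ Function.Injective A.mulVecLin := by
  rw [Matrix.rank]
  constructor
  · intro h
    rw [← LinearMap.ker_eq_bot]
    have := A.mulVecLin.finrank_range_add_finrank_ker
    simp only [h] at this
    have hdom : Module.finrank ℝ (Fin n → ℝ) = n := by simp
    rw [hdom] at this
    have : Module.finrank ℝ (LinearMap.ker A.mulVecLin) = 0 := by omega
    exact Submodule.finrank_eq_zero.mp this
  · intro h
    have := LinearMap.finrank_range_of_inj h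
    simp [this]

/-- Theorem 5, item 2: data-driven necessary and sufficient
condition for observability. With Λ̃ = [[I, 0], [T, V]] and rank(Z̄) = m₁ + n,
rank(Λ̃ Z̄) = m₁ + n if and only if rank(V) = n. -/
theorem stmt_17 {q m₁ n k : ℕ}
    (T : Matrix (Fin q) (Fin m₁) ℝ) (V : Matrix (Fin q) (Fin n) ℝ)
    (Zbar : Matrix (Fin m₁ ⊕ Fin n) (Fin k) ℝ)
    (hZ : Zbar.rank = m₁ + n) :
    (Matrix.fromBlocks (1 : Matrix (Fin m₁) (Fin m₁) ℝ) 0 T V * Zbar).rank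
        = m₁ + n ↔ V.rank = n := by
  set Λ := Matrix.fromBlocks (1 : Matrix (Fin m₁) (Fin m₁) ℝ) 0 T V with hΛ
  -- Z̄ mulVecLin is surjective
  have hZsurj : LinearMap.range Zbar.mulVecLin = ⊤ := by
    apply Submodule.eq_top_of_finrank_eq
    rw [← Matrix.rank, hZ]
    simp
  have hrank : (Λ * Zbar).rank = Λ.rank := by
    rw [Matrix.rank, Matrix.rank, Matrix.mulVecLin_mul,
      LinearMap.range_comp_of_range_eq_top _ hZsurj]
  rw [hrank]
  -- rank Λ = m₁+n ↔ Λ injective, rank V = n ↔ V injective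
  have hdomΛ : Module.finrank ℝ (Fin m₁ ⊕ Fin n → ℝ) = m₁ + n := by simp
  have hΛiff : Λ.rank = m₁ + n ↔ Function.Injective Λ.mulVecLin := by
    rw [Matrix.rank]
    constructor
    · intro h
      rw [← LinearMap.ker_eq_bot]
      have := Λ.mulVecLin.finrank_range_add_finrank_ker
      rw [h, hdomΛ] at this
      have h0 : Module.finrank ℝ (LinearMap.ker Λ.mulVecLin) = 0 := by omega
      exact Submodule.finrank_eq_zero.mp h0
    · intro h
      rw [LinearMap.finrank_range_of_inj h, hdomΛ]
  rw [hΛiff, rank_eq_iff_injective']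
  constructor
  · intro h x y hxy
    have : Λ.mulVecLin (Sum.elim 0 x) = Λ.mulVecLin (Sum.elim 0 y) := by
      simp only [Matrix.mulVecLin_apply, hΛ, Matrix.fromBlocks_mulVec]
      simp only [Matrix.mulVecLin_apply] at hxy
      simp [hxy]
    have := h this
    funext i
    have := congrFun this (Sum.inr i)
    simpa using this
  · intro h
    rw [← LinearMap.ker_eq_bot]
    rw [Submodule.eq_bot_iff]
    intro v hv
    simp only [LinearMap.mem_ker, Matrix.mulVecLin_apply] at hv
    obtain ⟨u, x, rfl⟩ : ∃ u x, v = Sum.elim u x :=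
      ⟨v ∘ Sum.inl, v ∘ Sum.inr, by funext i; cases i <;> rfl⟩
    rw [hΛ, Matrix.fromBlocks_mulVec] at hv
    have hu : u = 0 := by
      funext i
      have := congrFun hv (Sum.inl i)
      simpa using this
    have hx : V.mulVec x = 0 := by
      funext i
      have := congrFun hv (Sum.inr i)
      simpa [hu] using this
    have : x = 0 := by
      have := h (a₁ := x) (a₂ := 0) (by simpa using hx)
      simpa using this
    simp [hu, this]
end
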